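/- arXiv:2109.15111 — 3 statements merged into one kernel-verified Lean document; each statement's English description precedes it below -/
import Mathlib

section
/- The ℓ1-reconstruction error of a summary S with k supernodes satisfies the closed form RE(G|S) = Σ_{i=1}^k [4e_i - 4e_i²/C(n_i,2)] + Σ_{i=1}^k Σ_{j≠i} [2e_{ij} - 2e_{ij}²/(n_i n_j)]. -/
/-!
Split `V × V` into the blocks `V_i × V_j`. On the diagonal `A = A' = 0`, and on the rest of a
block `A'` is the constant edge density `q = m / N`, where `N` is the number of ordered pairs in
the block and `m` the number of them that are edges. For a 0/1-valued `g`,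
`|g - q| = g (1 - q) + (1 - g) q`, so the block contributes `m (1 - q) + (N - m) q = 2m - 2m²/N`.
Ordered pairs count each internal edge twice: `m = 2 e_i` and `N = n_i (n_i - 1) = 2 C(n_i, 2)`,
which turns this into `4 e_i - 4 e_i² / C(n_i, 2)`.
-/

open Finset
open scoped Classical

section BigOperators

variable {α ι M : Type*} [AddCommMonoid M]

theorem sum_sum_eq_sum_sum_fiberwise [Fintype α] [Fintype ι] [DecidableEq ι] (P : α → ι)
    (f : α → α → M) :
    ∑ u, ∑ v, f u v = ∑ i, ∑ j, ∑ u ∈ univ with P u = i, ∑ v ∈ univ with P v = j, f u v := by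
  rw [← sum_fiberwise univ P]
  refine sum_congr rfl fun i _ => ?_
  exact (sum_congr rfl fun u _ => (sum_fiberwise univ P (f u)).symm).trans sum_comm

theorem sum_sum_eq_sum_offDiag_of_eq_zero [DecidableEq α] (s : Finset α) (f : α → α → M)
    (hf : ∀ a ∈ s, f a a = 0) :
    ∑ a ∈ s, ∑ b ∈ s, f a b = ∑ p ∈ s.offDiag, f p.1 p.2 := by
  rw [← sum_product' s s f, ← diag_union_offDiag, sum_union (disjoint_diag_offDiag s), sum_diag,
    sum_eq_zero hf, zero_add]

theorem sum_sum_eq_sum_add_sum_sum_erase [Fintype ι] [DecidableEq ι] (g : ι → ι → M) :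
    ∑ i, ∑ j, g i j = ∑ i, g i i + ∑ i, ∑ j ∈ univ.erase i, g i j := by
  rw [← sum_add_distrib]
  exact sum_congr rfl fun i _ => (add_sum_erase _ _ (mem_univ i)).symm

end BigOperators

theorem abs_sub_eq_of_eq_zero_or_one {x q : ℝ} (hx : x = 0 ∨ x = 1) (hq₀ : 0 ≤ q)
    (hq₁ : q ≤ 1) : |x - q| = x * (1 - q) + (1 - x) * q := by
  rcases hx with rfl | rfl
  · rw [zero_sub, abs_neg, abs_of_nonneg hq₀]; ring
  · rw [abs_of_nonneg (by linarith)]; ring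

theorem sum_abs_sub_card_filter_div_card {s : Finset α} {g : α → ℝ}
    (hg : ∀ a ∈ s, g a = 0 ∨ g a = 1) :
    ∑ a ∈ s, |g a - #{a ∈ s | g a = 1} / #s| =
      2 * #{a ∈ s | g a = 1} - 2 * (#{a ∈ s | g a = 1} : ℝ) ^ 2 / #s := by
  set m := #{a ∈ s | g a = 1}
  rcases s.eq_empty_or_nonempty with rfl | hs
  · simp [m]
  have hs : (0 : ℝ) < #s := mod_cast hs.card_pos
  have hms : (m : ℝ) ≤ #s := mod_cast card_filter_le _ _
  have hsum : ∑ a ∈ s, g a = m := by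
    rw [natCast_card_filter]
    refine sum_congr rfl fun a ha => ?_
    rcases hg a ha with h | h <;> simp [h]
  calc ∑ a ∈ s, |g a - m / #s|
      = ∑ a ∈ s, (g a * (1 - m / #s) + (1 - g a) * (m / #s)) :=
        sum_congr rfl fun a ha => abs_sub_eq_of_eq_zero_or_one (hg a ha) (by positivity)
          (div_le_one_of_le₀ hms hs.le)
    _ = m * (1 - m / #s) + (#s - m) * (m / #s) := by
        rw [sum_add_distrib, ← sum_mul, ← sum_mul, sum_sub_distrib, hsum]; simp
    _ = 2 * m - 2 * (m : ℝ) ^ 2 / #s := by field_simp; ring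

section Blocks

variable {V : Type*} {A A' : V → V → ℝ}

theorem card_offDiag_eq_two_mul_choose_two [DecidableEq V] (F : Finset V) :
    #F.offDiag = 2 * (#F).choose 2 := by
  rw [offDiag_card, Nat.choose_two_right, Nat.mul_div_cancel' (Nat.even_mul_pred_self _).two_dvd,
    Nat.mul_sub_one]

theorem sum_offDiag_abs_sub_eq [DecidableEq V] {F : Finset V}
    (hA01 : ∀ u v, A u v = 0 ∨ A u v = 1) {e : ℕ}
    (he : 2 * e = #{p ∈ F.offDiag | A p.1 p.2 = 1})
    (hA' : ∀ p ∈ F.offDiag, A' p.1 p.2 = e / (#F).choose 2) :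
    ∑ p ∈ F.offDiag, |A p.1 p.2 - A' p.1 p.2| = 4 * e - 4 * (e : ℝ) ^ 2 / (#F).choose 2 := by
  have hq : (e : ℝ) / (#F).choose 2 = #{p ∈ F.offDiag | A p.1 p.2 = 1} / #F.offDiag := by
    rw [← he, card_offDiag_eq_two_mul_choose_two]; push_cast; ring
  calc ∑ p ∈ F.offDiag, |A p.1 p.2 - A' p.1 p.2|
      = ∑ p ∈ F.offDiag, |A p.1 p.2 - #{p ∈ F.offDiag | A p.1 p.2 = 1} / #F.offDiag| :=
        sum_congr rfl fun p hp => by rw [hA' p hp, hq]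
    _ = 4 * e - 4 * (e : ℝ) ^ 2 / (#F).choose 2 := by
        rw [sum_abs_sub_card_filter_div_card fun p _ => hA01 p.1 p.2, ← he,
          card_offDiag_eq_two_mul_choose_two]
        push_cast; ring

theorem sum_product_abs_sub_eq {F G : Finset V} (hA01 : ∀ u v, A u v = 0 ∨ A u v = 1) {m : ℕ}
    (hm : m = #{p ∈ F ×ˢ G | A p.1 p.2 = 1})
    (hA' : ∀ p ∈ F ×ˢ G, A' p.1 p.2 = m / (#F * #G)) :
    ∑ p ∈ F ×ˢ G, |A p.1 p.2 - A' p.1 p.2| = 2 * m - 2 * (m : ℝ) ^ 2 / (#F * #G) := by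
  have hq : (m : ℝ) / (#F * #G) = #{p ∈ F ×ˢ G | A p.1 p.2 = 1} / #(F ×ˢ G) := by
    rw [← hm, card_product]; push_cast; rfl
  rw [sum_congr rfl fun p hp => by rw [hA' p hp, hq],
    sum_abs_sub_card_filter_div_card fun p _ => hA01 p.1 p.2, ← hm, card_product]
  push_cast; rfl

end Blocks

theorem reconstruction_error_closed_form_general {V : Type*} [Fintype V] [DecidableEq V] {k : ℕ}
    (P : V → Fin k) (A : V → V → ℝ)
    (hA01 : ∀ u v, A u v = 0 ∨ A u v = 1)
    (hdiag : ∀ u, A u u = 0)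
    (nn e : Fin k → ℕ) (eij : Fin k → Fin k → ℕ)
    (hn : ∀ i, nn i = (Finset.univ.filter (fun v => P v = i)).card)
    (he : ∀ i, 2 * e i =
      ((Finset.univ : Finset (V × V)).filter
        (fun p => P p.1 = i ∧ P p.2 = i ∧ p.1 ≠ p.2 ∧ A p.1 p.2 = 1)).card)
    (heij : ∀ i j, i ≠ j → eij i j =
      ((Finset.univ : Finset (V × V)).filter
        (fun p => P p.1 = i ∧ P p.2 = j ∧ A p.1 p.2 = 1)).card)
    (A' : V → V → ℝ)
    (hA' : ∀ u v, A' u v =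
      if u = v then 0
      else if P u = P v then (e (P u) : ℝ) / ((nn (P u)).choose 2 : ℝ)
      else (eij (P u) (P v) : ℝ) / ((nn (P u) : ℝ) * (nn (P v) : ℝ))) :
    ∑ u, ∑ v, |A u v - A' u v|
      = (∑ i, (4 * (e i : ℝ) - 4 * (e i : ℝ) ^ 2 / ((nn i).choose 2 : ℝ)))
        + ∑ i, ∑ j ∈ Finset.univ.erase i,
            (2 * (eij i j : ℝ) - 2 * (eij i j : ℝ) ^ 2 / ((nn i : ℝ) * (nn j : ℝ))) := by
  set F : Fin k → Finset V := fun i => univ.filter fun v => P v = i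
  have hdiag_block : ∀ i, ∑ u ∈ F i, ∑ v ∈ F i, |A u v - A' u v| =
      4 * (e i : ℝ) - 4 * (e i : ℝ) ^ 2 / ((nn i).choose 2 : ℝ) := fun i => by
    rw [sum_sum_eq_sum_offDiag_of_eq_zero _ _ fun u _ => by simp [hA', hdiag], hn i]
    refine sum_offDiag_abs_sub_eq hA01 ?_ fun p hp => ?_
    · rw [he i]; congr 1; ext p; simp [F, and_assoc]
    · obtain ⟨h1, h2, hne⟩ : P p.1 = i ∧ P p.2 = i ∧ p.1 ≠ p.2 := by simpa [F] using hp
      rw [hA', if_neg hne, if_pos (h1.trans h2.symm), h1, hn i]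
  have hoff_block : ∀ i j, i ≠ j → ∑ u ∈ F i, ∑ v ∈ F j, |A u v - A' u v| =
      2 * (eij i j : ℝ) - 2 * (eij i j : ℝ) ^ 2 / ((nn i : ℝ) * (nn j : ℝ)) := fun i j hij => by
    rw [← sum_product' (F i) (F j) fun u v => |A u v - A' u v|, hn i, hn j]
    refine sum_product_abs_sub_eq hA01 ?_ fun p hp => ?_
    · rw [heij i j hij]; congr 1; ext p; simp [F, and_assoc]
    · obtain ⟨h1, h2⟩ : P p.1 = i ∧ P p.2 = j := by simpa [F] using hp
      have hne : p.1 ≠ p.2 := fun h => hij (h1.symm.trans (h ▸ h2))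
      rw [hA', if_neg hne, if_neg (h1 ▸ h2 ▸ hij), h1, h2, hn i, hn j]
  rw [sum_sum_eq_sum_sum_fiberwise P, sum_sum_eq_sum_add_sum_sum_erase]
  exact congr_arg₂ (· + ·) (sum_congr rfl fun i _ => hdiag_block i)
    (sum_congr rfl fun i _ => sum_congr rfl fun j hj => hoff_block i j (ne_of_mem_erase hj).symm)

/-- The ℓ1-reconstruction error of a summary `S` with `k` supernodes satisfies the
closed form
`RE(G|S) = Σ_i [4e_i - 4e_i²/C(n_i,2)] + Σ_i Σ_{j≠i} [2e_ij - 2e_ij²/(n_i n_j)]`. -/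
theorem reconstruction_error_closed_form {V : Type*} [Fintype V] [DecidableEq V] {k : ℕ}
    (P : V → Fin k) (A : V → V → ℝ)
    (hA01 : ∀ u v, A u v = 0 ∨ A u v = 1)
    (hAsym : ∀ u v, A u v = A v u)
    (hdiag : ∀ u, A u u = 0)
    (nn e : Fin k → ℕ) (eij : Fin k → Fin k → ℕ)
    (hn : ∀ i, nn i = (Finset.univ.filter (fun v => P v = i)).card)
    (hn2 : ∀ i, 2 ≤ nn i)
    (he : ∀ i, 2 * e i =
      ((Finset.univ : Finset (V × V)).filter
        (fun p => P p.1 = i ∧ P p.2 = i ∧ p.1 ≠ p.2 ∧ A p.1 p.2 = 1)).card)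
    (heij : ∀ i j, i ≠ j → eij i j =
      ((Finset.univ : Finset (V × V)).filter
        (fun p => P p.1 = i ∧ P p.2 = j ∧ A p.1 p.2 = 1)).card)
    (A' : V → V → ℝ)
    (hA' : ∀ u v, A' u v =
      if u = v then 0
      else if P u = P v then (e (P u) : ℝ) / ((nn (P u)).choose 2 : ℝ)
      else (eij (P u) (P v) : ℝ) / ((nn (P u) : ℝ) * (nn (P v) : ℝ))) :
    ∑ u, ∑ v, |A u v - A' u v|
      = (∑ i, (4 * (e i : ℝ) - 4 * (e i : ℝ) ^ 2 / ((nn i).choose 2 : ℝ)))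
        + ∑ i, ∑ j ∈ Finset.univ.erase i,
            (2 * (eij i j : ℝ) - 2 * (eij i j : ℝ) ^ 2 / ((nn i : ℝ) * (nn j : ℝ))) :=
  reconstruction_error_closed_form_general P A hA01 hdiag nn e eij hn he heij A' hA'
end

section
/- Merging two supernodes V_a and V_b changes the ℓ1-reconstruction error by score = -4e_a²/C(n_a,2) - Σ_{i≠a} 4e_{ai}²/(n_a n_i) + 4e_{ab}²/(n_a n_b) - 4e_b²/C(n_b,2) - Σ_{i≠b} 4e_{bi}²/(n_b n_i) + 4(e_a+e_b+e_{ab})²/C(n_a+n_b,2) + (4/(n_a+n_b)) Σ_{i≠a,b} (e_{ai}² + e_{bi}² + 2e_{ai}e_{bi})/n_i, where score = RE(G|S) - RE(G|S^{(a,b)}) and S^{(a,b)} is the summary obtained by merging V_a and V_b (with new node size n_a+n_b, internal edge count e_a+e_b+e_{ab}, and cross edge counts e_{ai}+e_{bi}). -/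
/-!
Split every sum over the supernodes into the terms at `a`, at `b`, and a sum over the remaining
supernodes `R`. The terms indexed by `R` alone (internal errors of `V_i` and superedges inside `R`)
occur in both summaries and cancel. By symmetry of `e_{ij}` each superedge between `{a, b}` and
`i ∈ R` is counted twice, and its linear part `2 e` cancels against that of the merged superedge,
leaving for each `i` a rational identity in `e_{ai}, e_{bi}, n_a, n_b, n_i`.
-/

open Finset

namespace Finset

variable {ι M : Type*} [DecidableEq ι] [AddCommMonoid M]

theorem sum_erase_eq_add_sum_sdiff_pair {s : Finset ι} {a b : ι} (hab : a ≠ b) (hb : b ∈ s)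
    (f : ι → M) : ∑ i ∈ s.erase a, f i = f b + ∑ i ∈ s \ {a, b}, f i := by
  rw [sdiff_insert, sdiff_singleton_eq_erase, erase_right_comm,
    add_sum_erase _ _ (mem_erase.2 ⟨hab.symm, hb⟩)]

theorem sum_eq_add_add_sum_sdiff_pair {s : Finset ι} {a b : ι} (hab : a ≠ b) (ha : a ∈ s)
    (hb : b ∈ s) (f : ι → M) : ∑ i ∈ s, f i = f a + f b + ∑ i ∈ s \ {a, b}, f i := by
  rw [← add_sum_erase s f ha, sum_erase_eq_add_sum_sdiff_pair hab hb, add_assoc]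

theorem sum_sum_erase_eq_of_ne [Fintype ι] {a b : ι} (hab : a ≠ b) (g : ι → ι → M) :
    ∑ i, ∑ j ∈ univ.erase i, g i j
      = g a b + g b a + ∑ i ∈ univ \ {a, b}, (g a i + g i a + g b i + g i b)
        + ∑ i ∈ univ \ {a, b}, ∑ j ∈ (univ \ {a, b}).erase i, g i j := by
  have hinner : ∀ i ∈ (univ : Finset ι) \ {a, b}, ∑ j ∈ univ.erase i, g i j
      = g i a + g i b + ∑ j ∈ (univ \ {a, b}).erase i, g i j := by
    intro i hi
    simp only [mem_sdiff, mem_univ, mem_insert, mem_singleton, true_and, not_or] at hi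
    rw [sum_eq_add_add_sum_sdiff_pair hab (mem_erase.2 ⟨Ne.symm hi.1, mem_univ a⟩)
      (mem_erase.2 ⟨Ne.symm hi.2, mem_univ b⟩), erase_sdiff_comm]
  rw [sum_eq_add_add_sum_sdiff_pair hab (mem_univ a) (mem_univ b), sum_congr rfl hinner,
    sum_erase_eq_add_sum_sdiff_pair hab (mem_univ b),
    sum_erase_eq_add_sum_sdiff_pair hab.symm (mem_univ a), pair_comm b a]
  simp only [sum_add_distrib]
  abel

theorem sum_sum_erase_eq_of_symm [Fintype ι] {a b : ι} (hab : a ≠ b) (g : ι → ι → M)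
    (hg : ∀ i j, g i j = g j i) :
    ∑ i, ∑ j ∈ univ.erase i, g i j
      = 2 • (g a b + ∑ i ∈ univ \ {a, b}, (g a i + g b i))
        + ∑ i ∈ univ \ {a, b}, ∑ j ∈ (univ \ {a, b}).erase i, g i j := by
  have hswap : ∀ i ∈ univ \ {a, b}, g a i + g i a + g b i + g i b = 2 • (g a i + g b i) :=
    fun i _ => by rw [hg i a, hg i b, two_nsmul]; abel
  rw [sum_sum_erase_eq_of_ne hab, hg b a, sum_congr rfl hswap, ← smul_sum, two_nsmul, two_nsmul]
  abel

end Finset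

theorem cross_error_merge_change (x y p q m : ℝ) :
    2 * ((2 * x - 2 * x ^ 2 / (p * m)) + (2 * y - 2 * y ^ 2 / (q * m)))
      - (4 * (x + y) - 4 * (x + y) ^ 2 / ((p + q) * m))
      = 4 / (p + q) * (x ^ 2 / m + y ^ 2 / m + 2 * x * y / m)
        - 4 * x ^ 2 / (p * m) - 4 * y ^ 2 / (q * m) := by
  simp only [div_eq_mul_inv, mul_inv]
  ring

theorem merge_score_closed_form_general {k : ℕ} (a b : Fin k) (hab : a ≠ b)
    (nn e : Fin k → ℕ) (eij : Fin k → Fin k → ℕ)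
    (hsym : ∀ i j, eij i j = eij j i)
    (REold REnew : ℝ)
    (hREold : REold =
      (∑ i, (4 * (e i : ℝ) - 4 * (e i : ℝ) ^ 2 / ((nn i).choose 2 : ℝ)))
        + ∑ i, ∑ j ∈ Finset.univ.erase i,
            (2 * (eij i j : ℝ) - 2 * (eij i j : ℝ) ^ 2 / ((nn i : ℝ) * (nn j : ℝ))))
    (hREnew : REnew =
      (4 * ((e a : ℝ) + (e b : ℝ) + (eij a b : ℝ))
          - 4 * ((e a : ℝ) + (e b : ℝ) + (eij a b : ℝ)) ^ 2 / ((nn a + nn b).choose 2 : ℝ))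
        + (∑ i ∈ (Finset.univ \ {a, b}),
            (4 * (e i : ℝ) - 4 * (e i : ℝ) ^ 2 / ((nn i).choose 2 : ℝ)))
        + (∑ i ∈ (Finset.univ \ {a, b}),
            (4 * ((eij a i : ℝ) + (eij b i : ℝ))
              - 4 * ((eij a i : ℝ) + (eij b i : ℝ)) ^ 2
                  / (((nn a : ℝ) + (nn b : ℝ)) * (nn i : ℝ))))
        + ∑ i ∈ (Finset.univ \ {a, b}), ∑ j ∈ (Finset.univ \ {a, b}).erase i,
            (2 * (eij i j : ℝ) - 2 * (eij i j : ℝ) ^ 2 / ((nn i : ℝ) * (nn j : ℝ)))) :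
    REold - REnew =
      - 4 * (e a : ℝ) ^ 2 / ((nn a).choose 2 : ℝ)
      - (∑ i ∈ Finset.univ.erase a, 4 * (eij a i : ℝ) ^ 2 / ((nn a : ℝ) * (nn i : ℝ)))
      + 4 * (eij a b : ℝ) ^ 2 / ((nn a : ℝ) * (nn b : ℝ))
      - 4 * (e b : ℝ) ^ 2 / ((nn b).choose 2 : ℝ)
      - (∑ i ∈ Finset.univ.erase b, 4 * (eij b i : ℝ) ^ 2 / ((nn b : ℝ) * (nn i : ℝ)))
      + 4 * ((e a : ℝ) + (e b : ℝ) + (eij a b : ℝ)) ^ 2 / ((nn a + nn b).choose 2 : ℝ)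
      + (4 / ((nn a : ℝ) + (nn b : ℝ)))
          * ∑ i ∈ (Finset.univ \ {a, b}),
              ((eij a i : ℝ) ^ 2 / (nn i : ℝ) + (eij b i : ℝ) ^ 2 / (nn i : ℝ)
                + 2 * (eij a i : ℝ) * (eij b i : ℝ) / (nn i : ℝ)) := by
  have hcross := sum_congr rfl fun i (_ : i ∈ (univ : Finset (Fin k)) \ {a, b}) =>
    cross_error_merge_change (eij a i) (eij b i) (nn a) (nn b) (nn i)
  rw [hREold, hREnew, sum_sum_erase_eq_of_symm hab
      (fun i j => 2 * (eij i j : ℝ) - 2 * (eij i j : ℝ) ^ 2 / ((nn i : ℝ) * (nn j : ℝ)))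
      (fun i j => by rw [hsym i j, mul_comm (nn i : ℝ)]),
    sum_eq_add_add_sum_sdiff_pair hab (mem_univ a) (mem_univ b),
    sum_erase_eq_add_sum_sdiff_pair hab (mem_univ b),
    sum_erase_eq_add_sum_sdiff_pair hab.symm (mem_univ a), pair_comm b a, hsym b a]
  simp only [nsmul_eq_mul, Nat.cast_ofNat, sum_add_distrib, sum_sub_distrib, ← mul_sum] at hcross ⊢
  linear_combination hcross

/-- Merging two supernodes `V_a` and `V_b` changes the ℓ1-reconstruction error
(computed via its closed form) by the stated score expression. -/
theorem merge_score_closed_form {k : ℕ} (a b : Fin k) (hab : a ≠ b)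
    (nn e : Fin k → ℕ) (eij : Fin k → Fin k → ℕ)
    (hsym : ∀ i j, eij i j = eij j i)
    (hn2 : ∀ i, 2 ≤ nn i)
    (REold REnew : ℝ)
    (hREold : REold =
      (∑ i, (4 * (e i : ℝ) - 4 * (e i : ℝ) ^ 2 / ((nn i).choose 2 : ℝ)))
        + ∑ i, ∑ j ∈ Finset.univ.erase i,
            (2 * (eij i j : ℝ) - 2 * (eij i j : ℝ) ^ 2 / ((nn i : ℝ) * (nn j : ℝ))))
    (hREnew : REnew =
      (4 * ((e a : ℝ) + (e b : ℝ) + (eij a b : ℝ))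
          - 4 * ((e a : ℝ) + (e b : ℝ) + (eij a b : ℝ)) ^ 2 / ((nn a + nn b).choose 2 : ℝ))
        + (∑ i ∈ (Finset.univ \ {a, b}),
            (4 * (e i : ℝ) - 4 * (e i : ℝ) ^ 2 / ((nn i).choose 2 : ℝ)))
        + (∑ i ∈ (Finset.univ \ {a, b}),
            (4 * ((eij a i : ℝ) + (eij b i : ℝ))
              - 4 * ((eij a i : ℝ) + (eij b i : ℝ)) ^ 2
                  / (((nn a : ℝ) + (nn b : ℝ)) * (nn i : ℝ))))
        + ∑ i ∈ (Finset.univ \ {a, b}), ∑ j ∈ (Finset.univ \ {a, b}).erase i,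
            (2 * (eij i j : ℝ) - 2 * (eij i j : ℝ) ^ 2 / ((nn i : ℝ) * (nn j : ℝ)))) :
    REold - REnew =
      - 4 * (e a : ℝ) ^ 2 / ((nn a).choose 2 : ℝ)
      - (∑ i ∈ Finset.univ.erase a, 4 * (eij a i : ℝ) ^ 2 / ((nn a : ℝ) * (nn i : ℝ)))
      + 4 * (eij a b : ℝ) ^ 2 / ((nn a : ℝ) * (nn b : ℝ))
      - 4 * (e b : ℝ) ^ 2 / ((nn b).choose 2 : ℝ)
      - (∑ i ∈ Finset.univ.erase b, 4 * (eij b i : ℝ) ^ 2 / ((nn b : ℝ) * (nn i : ℝ)))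
      + 4 * ((e a : ℝ) + (e b : ℝ) + (eij a b : ℝ)) ^ 2 / ((nn a + nn b).choose 2 : ℝ)
      + (4 / ((nn a : ℝ) + (nn b : ℝ)))
          * ∑ i ∈ (Finset.univ \ {a, b}),
              ((eij a i : ℝ) ^ 2 / (nn i : ℝ) + (eij b i : ℝ) ^ 2 / (nn i : ℝ)
                + 2 * (eij a i : ℝ) * (eij b i : ℝ) / (nn i : ℝ)) :=
  merge_score_closed_form_general a b hab nn e eij hsym REold REnew hREold hREnew
end

section
/- For a pairwise-independent random hash h: {1,...,n} → {1,...,w}, the expected excess of the count-min row estimate over the true inner product of nonnegative vectors u, v is at most ‖u‖₁‖v‖₁/w: E[⟨û,v̂⟩ − ⟨u,v⟩] ≤ (1/w)·(Σ_p u_p)(Σ_q v_q). -/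
/-!
Expanding the product of bucket sums, the row estimate is the sum of `u p * v q` over all
pairs `(p, q)` hashed to the same bucket; the diagonal pairs give `⟨u, v⟩`, so the excess is
the sum over colliding pairs `q ≠ p`. Taking expectations, each such pair contributes
`u p * v q * Pr[h q = h p] ≤ u p * v q / w`, and summing over all pairs gives `‖u‖₁‖v‖₁ / w`.
-/

open Finset
open scoped Classical

section Buckets

variable {α β R : Type*} [Fintype α] [Fintype β] [DecidableEq β]

/-- The count-min sketch coordinate `û_j` of `u` under the hash `g`. -/
def bucketSum [AddCommMonoid R] (g : α → β) (u : α → R) (j : β) : R :=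
  ∑ p ∈ univ.filter (fun p => g p = j), u p

lemma sum_bucketSum_mul_bucketSum [CommSemiring R] (g : α → β) (u v : α → R) :
    ∑ j, bucketSum g u j * bucketSum g v j
      = ∑ p, ∑ q ∈ univ.filter (fun q => g q = g p), u p * v q := by
  rw [← sum_fiberwise univ g]
  refine sum_congr rfl fun j _ => ?_
  rw [bucketSum, bucketSum, sum_mul_sum]
  refine sum_congr rfl fun p hp => ?_
  rw [(mem_filter.1 hp).2]

lemma sum_bucketSum_mul_bucketSum_sub_sum_mul [DecidableEq α] [CommRing R]
    (g : α → β) (u v : α → R) :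
    ∑ j, bucketSum g u j * bucketSum g v j - ∑ p, u p * v p
      = ∑ p, ∑ q ∈ (univ.erase p).filter (fun q => g q = g p), u p * v q := by
  rw [sum_bucketSum_mul_bucketSum, ← sum_sub_distrib]
  refine sum_congr rfl fun p _ => ?_
  rw [filter_erase, sum_erase_eq_sub (by simp)]

end Buckets

section Expectation

variable {Ω α R : Type*} [Fintype Ω]

lemma sum_mul_sum_filter_eq [CommSemiring R] (Pr : Ω → R) (E : Ω → α → Prop)
    [∀ ω a, Decidable (E ω a)] (s : Finset α) (f : α → R) :
    ∑ ω, Pr ω * ∑ a ∈ s.filter (E ω), f a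
      = ∑ a ∈ s, f a * ∑ ω ∈ univ.filter (fun ω => E ω a), Pr ω := by
  simp_rw [sum_filter, mul_sum, mul_ite, mul_zero]
  rw [sum_comm]
  refine sum_congr rfl fun a _ => sum_congr rfl fun ω _ => ?_
  split_ifs <;> ring

lemma sum_mul_sum_filter_le [CommSemiring R] [PartialOrder R] [IsOrderedRing R]
    (Pr : Ω → R) (E : Ω → α → Prop) [∀ ω a, Decidable (E ω a)] (s : Finset α) (f : α → R)
    (hf : ∀ a ∈ s, 0 ≤ f a) (c : R)
    (hE : ∀ a ∈ s, ∑ ω ∈ univ.filter (fun ω => E ω a), Pr ω ≤ c) :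
    ∑ ω, Pr ω * ∑ a ∈ s.filter (E ω), f a ≤ c * ∑ a ∈ s, f a := by
  rw [sum_mul_sum_filter_eq, mul_sum]
  refine sum_le_sum fun a ha => ?_
  rw [mul_comm c]
  exact mul_le_mul_of_nonneg_left (hE a ha) (hf a ha)

end Expectation

theorem countmin_expected_excess_general {n w : ℕ}
    {Ω : Type*} [Fintype Ω]
    (Pr : Ω → ℝ)
    (h : Ω → Fin n → Fin w)
    (hpair : ∀ p q : Fin n, p ≠ q →
      ∑ ω ∈ Finset.univ.filter (fun ω => h ω p = h ω q), Pr ω ≤ 1 / (w : ℝ))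
    (u v : Fin n → ℝ) (hu : ∀ p, 0 ≤ u p) (hv : ∀ p, 0 ≤ v p) :
    ∑ ω, Pr ω *
        ((∑ j : Fin w,
            (∑ p ∈ Finset.univ.filter (fun p => h ω p = j), u p) *
            (∑ q ∈ Finset.univ.filter (fun q => h ω q = j), v q))
          - ∑ p, u p * v p)
      ≤ (1 / (w : ℝ)) * (∑ p, u p) * (∑ q, v q) := by
  have huv : ∀ p q, 0 ≤ u p * v q := fun p q => mul_nonneg (hu p) (hv q)
  calc _ = ∑ ω, Pr ω * ∑ p, ∑ q ∈ (univ.erase p).filter (fun q => h ω q = h ω p), u p * v q :=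
        sum_congr rfl fun ω _ =>
          congrArg (Pr ω * ·) (sum_bucketSum_mul_bucketSum_sub_sum_mul (h ω) u v)
    _ = ∑ p, ∑ ω, Pr ω * ∑ q ∈ (univ.erase p).filter (fun q => h ω q = h ω p), u p * v q := by
        simp_rw [mul_sum (s := univ)]
        exact sum_comm
    _ ≤ ∑ p, 1 / (w : ℝ) * ∑ q ∈ univ.erase p, u p * v q :=
        sum_le_sum fun p _ => sum_mul_sum_filter_le Pr _ _ _ (fun q _ => huv p q) _
          fun q hq => hpair q p (ne_of_mem_erase hq)
    _ ≤ ∑ p, 1 / (w : ℝ) * ∑ q, u p * v q :=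
        sum_le_sum fun p _ =>
          mul_le_mul_of_nonneg_left (sum_le_univ_sum_of_nonneg (huv p)) (by positivity)
    _ = _ := by rw [← mul_sum, mul_assoc, sum_mul_sum]

/-- For a pairwise-independent random hash `h : {1,...,n} → {1,...,w}`, the
expected excess of the count-min row estimate over the true inner product of
nonnegative vectors `u, v` is at most `‖u‖₁‖v‖₁/w`. -/
theorem countmin_expected_excess {n w : ℕ} (hw : 0 < w)
    {Ω : Type*} [Fintype Ω]
    (Pr : Ω → ℝ) (hPr : ∀ ω, 0 ≤ Pr ω) (hPr1 : ∑ ω, Pr ω = 1)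
    (h : Ω → Fin n → Fin w)
    (hpair : ∀ p q : Fin n, p ≠ q →
      ∑ ω ∈ Finset.univ.filter (fun ω => h ω p = h ω q), Pr ω ≤ 1 / (w : ℝ))
    (u v : Fin n → ℝ) (hu : ∀ p, 0 ≤ u p) (hv : ∀ p, 0 ≤ v p) :
    ∑ ω, Pr ω *
        ((∑ j : Fin w,
            (∑ p ∈ Finset.univ.filter (fun p => h ω p = j), u p) *
            (∑ q ∈ Finset.univ.filter (fun q => h ω q = j), v q))
          - ∑ p, u p * v p)
      ≤ (1 / (w : ℝ)) * (∑ p, u p) * (∑ q, v q) :=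
  countmin_expected_excess_general Pr h hpair u v hu hv
end
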